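/- arXiv:math/0610194 — 5 statements merged into one kernel-verified Lean document; each statement's English description precedes it below -/
import Mathlib

section
/- Let M be a homotopical category, M_Q a full subcategory, Q : M → M a functor whose image lies in M_Q, and q : Q ⟶ 𝟭_M a natural transformation whose components are weak equivalences. Then the inclusion I : M_Q ↪ M induces an equivalence of categories Ho(M_Q) ≃ Ho(M), where Ho denotes localization at the weak equivalences (M_Q being given the weak equivalences of M between its objects). -/
/-!
Two-out-of-six yields two-out-of-three, so `Q` preserves weak equivalences and corestricts to a
functor `M ⥤ M_Q` which respects weak equivalences. The transformation `q` provides natural weak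
equivalences `Q ∘ I ⟶ 𝟭` and `I ∘ Q ⟶ 𝟭`; these become isomorphisms after localization, so the
functors induced by `I` and `Q` are mutually inverse.
-/

open CategoryTheory

namespace CategoryTheory

namespace MorphismProperty

variable {C : Type*} [Category* C] (W : MorphismProperty C)

lemma hasTwoOutOfThreeProperty_of_twoOutOfSix
    (h26 : ∀ {X Y Z T : C} (f : X ⟶ Y) (g : Y ⟶ Z) (h : Z ⟶ T),
      W (f ≫ g) → W (g ≫ h) → W f ∧ W g ∧ W h ∧ W (f ≫ g ≫ h)) :
    W.HasTwoOutOfThreeProperty where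
  comp_mem f g hf hg := by
    simpa using (h26 f (𝟙 _) g (by simpa using hf) (by simpa using hg)).2.2.2
  of_postcomp f g hg hfg := (h26 f g (𝟙 _) hfg (by simpa using hg)).1
  of_precomp f g hf hfg := (h26 (𝟙 _) f g (by simpa using hf) hfg).2.2.1

lemma map_mem_of_natTrans_app_mem [W.HasTwoOutOfThreeProperty] {F : C ⥤ C} (p : F ⟶ 𝟭 C)
    (hp : ∀ X, W (p.app X)) {X Y : C} {f : X ⟶ Y} (hf : W f) : W (F.map f) :=
  W.of_postcomp _ _ (hp Y) (by rw [p.naturality f]; exact W.comp_mem _ _ (hp X) hf)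

end MorphismProperty

namespace LocalizerMorphism

variable {C₁ C₂ : Type*} [Category* C₁] [Category* C₂]
  {W₁ : MorphismProperty C₁} {W₂ : MorphismProperty C₂} (Φ : LocalizerMorphism W₁ W₂)

lemma isLocalizedEquivalence_of_counit_of_counit (Ψ : LocalizerMorphism W₂ W₁)
    (ε₁ : Φ.functor ⋙ Ψ.functor ⟶ 𝟭 C₁) (ε₂ : Ψ.functor ⋙ Φ.functor ⟶ 𝟭 C₂)
    (hε₁ : ∀ X₁, W₁ (ε₁.app X₁)) (hε₂ : ∀ X₂, W₂ (ε₂.app X₂)) :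
    Φ.IsLocalizedEquivalence where
  isEquivalence := by
    have : IsIso (Functor.whiskerRight ε₁ W₁.Q) :=
      (NatTrans.isIso_iff_isIso_app _).2 fun _ ↦ Localization.inverts W₁.Q W₁ _ (hε₁ _)
    have : IsIso (Functor.whiskerRight ε₂ W₂.Q) :=
      (NatTrans.isIso_iff_isIso_app _).2 fun _ ↦ Localization.inverts W₂.Q W₂ _ (hε₂ _)
    refine (Localization.equivalence W₁.Q W₁ W₂.Q W₂ (Φ.functor ⋙ W₂.Q)
      (Φ.localizedFunctor W₁.Q W₂.Q)
      (Ψ.functor ⋙ W₁.Q) (Ψ.localizedFunctor W₂.Q W₁.Q) ?_ ?_).isEquivalence_functor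
    · exact Functor.associator _ _ _ ≪≫
        Functor.isoWhiskerLeft _ (CatCommSq.iso Ψ.functor W₂.Q W₁.Q _).symm ≪≫
        (Functor.associator _ _ _).symm ≪≫ asIso (Functor.whiskerRight ε₁ W₁.Q) ≪≫
        Functor.leftUnitor _
    · exact Functor.associator _ _ _ ≪≫
        Functor.isoWhiskerLeft _ (CatCommSq.iso Φ.functor W₁.Q W₂.Q _).symm ≪≫
        (Functor.associator _ _ _).symm ≪≫ asIso (Functor.whiskerRight ε₂ W₂.Q) ≪≫
        Functor.leftUnitor _

lemma isEquivalence_constructionLift [Φ.IsLocalizedEquivalence]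
    (hF : W₁.IsInvertedBy (Φ.functor ⋙ W₂.Q)) :
    (Localization.Construction.lift (Φ.functor ⋙ W₂.Q) hF).IsEquivalence :=
  have : CatCommSq Φ.functor W₁.Q W₂.Q (Localization.Construction.lift _ hF) :=
    ⟨eqToIso (Localization.Construction.fac _ _).symm⟩
  Φ.isEquivalence W₁.Q W₂.Q _

variable [Φ.functor.Full] [Φ.functor.Faithful] [W₂.HasTwoOutOfThreeProperty]
  {ρ : C₂ ⥤ C₁} (p : ρ ⋙ Φ.functor ⟶ 𝟭 C₂) (hp : ∀ X₂, W₂ (p.app X₂))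
  (hW₁ : W₁ = W₂.inverseImage Φ.functor)

include hp hW₁ in
lemma isLocalizedEquivalence_of_functorial_left_resolutions : Φ.IsLocalizedEquivalence := by
  let Ψ : LocalizerMorphism W₂ W₁ :=
    { functor := ρ
      map := by
        rw [hW₁]
        exact fun _ _ _ hf ↦ W₂.map_mem_of_natTrans_app_mem p hp hf }
  let ε₁ : Φ.functor ⋙ ρ ⟶ 𝟭 C₁ :=
    ((Functor.whiskeringRight C₁ C₁ C₂).obj Φ.functor).preimage (Φ.functor.whiskerLeft p)
  have hε₁ (X₁ : C₁) : W₁ (ε₁.app X₁) := by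
    have : Φ.functor.map (ε₁.app X₁) = p.app (Φ.functor.obj X₁) :=
      NatTrans.congr_app (((Functor.whiskeringRight C₁ C₁ C₂).obj Φ.functor).map_preimage
        (X := Φ.functor ⋙ ρ) (Y := 𝟭 C₁) (Φ.functor.whiskerLeft p)) X₁
    have hmem : W₂.inverseImage Φ.functor (ε₁.app X₁) := by
      rw [MorphismProperty.inverseImage_iff, this]
      exact hp _
    rwa [← hW₁] at hmem
  exact Φ.isLocalizedEquivalence_of_counit_of_counit Ψ ε₁ p hε₁ hp

end LocalizerMorphism

end CategoryTheory

theorem statement1_general {M : Type u} [Category.{v} M] (W : MorphismProperty M)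
    (h26 : ∀ {X Y Z T : M} (f : X ⟶ Y) (g : Y ⟶ Z) (h : Z ⟶ T),
      W (f ≫ g) → W (g ≫ h) → W f ∧ W g ∧ W h ∧ W (f ≫ g ≫ h))
    (P : M → Prop) (Q : M ⥤ M) (hQ : ∀ X : M, P (Q.obj X))
    (q : Q ⟶ 𝟭 M) (hq : ∀ X : M, W (q.app X)) :
    (Localization.Construction.lift
      (W := W.inverseImage (ObjectProperty.ι P))
      (ObjectProperty.ι P ⋙ W.Q)
      (fun _ _ f hf => Localization.inverts W.Q W _ hf)).IsEquivalence := by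
  have := W.hasTwoOutOfThreeProperty_of_twoOutOfSix h26
  let Φ := LocalizerMorphism.ofEq (W₁ := W.inverseImage (ObjectProperty.ι P)) (W₂ := W) rfl
  have : Φ.functor.Full := inferInstanceAs (ObjectProperty.ι P).Full
  have : Φ.functor.Faithful := inferInstanceAs (ObjectProperty.ι P).Faithful
  have := Φ.isLocalizedEquivalence_of_functorial_left_resolutions (ρ := ObjectProperty.lift P Q hQ)
    q hq rfl
  exact Φ.isEquivalence_constructionLift _

/-- If `(Q, q)` is a left deformation of a homotopical category `M` into a
full subcategory `M_Q`, then the inclusion `M_Q ↪ M` induces an equivalence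
`Ho(M_Q) ≃ Ho(M)` of localizations at the weak equivalences. -/
theorem statement1 {M : Type u} [Category.{v} M] (W : MorphismProperty M)
    (hid : ∀ X : M, W (𝟙 X))
    (h26 : ∀ {X Y Z T : M} (f : X ⟶ Y) (g : Y ⟶ Z) (h : Z ⟶ T),
      W (f ≫ g) → W (g ≫ h) → W f ∧ W g ∧ W h ∧ W (f ≫ g ≫ h))
    (P : M → Prop) (Q : M ⥤ M) (hQ : ∀ X : M, P (Q.obj X))
    (q : Q ⟶ 𝟭 M) (hq : ∀ X : M, W (q.app X)) :
    (Localization.Construction.lift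
      (W := W.inverseImage (ObjectProperty.ι P))
      (ObjectProperty.ι P ⋙ W.Q)
      (fun _ _ f hf => Localization.inverts W.Q W _ hf)).IsEquivalence :=
  statement1_general W h26 P Q hQ q hq
end

section
/- Let F : M → N be a functor between homotopical categories, and let (Q, q) be a left deformation of M into a full subcategory M_Q on which F preserves weak equivalences. Then the composite δ ∘ F ∘ Q : M → Ho(N) (where δ : N → Ho(N) is the localization) sends weak equivalences to isomorphisms, and together with the natural transformation δ(F q) : δ ∘ F ∘ Q ⟶ δ ∘ F it is terminal among pairs (G, α) where G : M → Ho(N) sends weak equivalences to isomorphisms and α : G ⟶ δ ∘ F: every such α factors uniquely through δ(F q). -/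
/-!
Since `q : Q ⟶ 𝟭` is a natural weak equivalence, 2-out-of-3 shows that `Q` preserves weak
equivalences, so `δFQ` is homotopical because `F` is homotopical on `M_Q ⊇ Q(M)`. A lift
of `α : G ⟶ δF` through `δFq` is forced: naturality at `q_X` gives
`G(q_X) ≫ β_X = β_{QX} ≫ δFQ(q_X)`, and `δFQ(q_X) = δF(q_{QX})`, so `β_X = G(q_X)⁻¹ ≫ α_{QX}`.
-/

open CategoryTheory

namespace CategoryTheory

variable {C : Type*} [Category C] {D : Type*} [Category D]

lemma MorphismProperty.hasTwoOutOfThreeProperty_of_twoOutOfSix_s3 (W : MorphismProperty C)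
    (h26 : ∀ {X Y Z T : C} (f : X ⟶ Y) (g : Y ⟶ Z) (h : Z ⟶ T),
      W (f ≫ g) → W (g ≫ h) → W f ∧ W g ∧ W h ∧ W (f ≫ g ≫ h)) :
    W.HasTwoOutOfThreeProperty where
  comp_mem f g hf hg := by
    simpa using (h26 f (𝟙 _) g (by simpa using hf) (by simpa using hg)).2.2.2
  of_postcomp f g hg hfg := (h26 f g (𝟙 _) hfg (by simpa using hg)).1
  of_precomp f g hf hfg := (h26 (𝟙 _) f g (by simpa using hf) hfg).2.2.1

lemma MorphismProperty.map_mem_of_app_mem (W : MorphismProperty C)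
    [W.HasTwoOutOfThreeProperty] {Q : C ⥤ C} (q : Q ⟶ 𝟭 C) (hq : ∀ X, W (q.app X))
    {X Y : C} {f : X ⟶ Y} (hf : W f) : W (Q.map f) :=
  W.of_postcomp _ _ (hq Y) (by rw [q.naturality]; exact W.comp_mem _ _ (hq X) hf)

/-- `Q(q_X)` and `q_{QX}` agree after `q_X`; applying `Q` and cancelling `H(Q q_X)` gives
`HQQ(q_X) = HQ(q_{QX})`, and naturality of `q` at both maps then leaves only the epi `H(q_{QQX})`
to cancel. -/
lemma map_map_app_eq_map_app_obj {Q : C ⥤ C} (q : Q ⟶ 𝟭 C) (H : C ⥤ D) (X : C)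
    [Mono (H.map (Q.map (q.app X)))] [Epi (H.map (q.app (Q.obj (Q.obj X))))] :
    H.map (Q.map (q.app X)) = H.map (q.app (Q.obj X)) := by
  have hQ : H.map (Q.map (Q.map (q.app X))) = H.map (Q.map (q.app (Q.obj X))) := by
    rw [← cancel_mono (H.map (Q.map (q.app X))), ← H.map_comp, ← H.map_comp, ← Q.map_comp,
      ← Q.map_comp]
    exact congrArg (H.map ∘ Q.map) (q.naturality (q.app X))
  rw [← cancel_epi (H.map (q.app (Q.obj (Q.obj X)))), ← H.map_comp, ← H.map_comp]
  calc H.map (q.app (Q.obj (Q.obj X)) ≫ Q.map (q.app X))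
      = H.map (Q.map (Q.map (q.app X))) ≫ H.map (q.app (Q.obj X)) := by
        rw [← H.map_comp]; exact congrArg H.map (q.naturality _).symm
    _ = H.map (q.app (Q.obj (Q.obj X)) ≫ q.app (Q.obj X)) := by
        rw [hQ, ← H.map_comp]; exact congrArg H.map (q.naturality _)

lemma existsUnique_comp_whiskerRight_eq {Q : C ⥤ C} (q : Q ⟶ 𝟭 C) {G H : C ⥤ D}
    (hG : ∀ X, IsIso (G.map (q.app X)))
    (hH : ∀ X, H.map (Q.map (q.app X)) = H.map (q.app (Q.obj X))) (α : G ⟶ H) :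
    ∃! β : G ⟶ Q ⋙ H, β ≫ Functor.whiskerRight q H ≫ (Functor.leftUnitor H).hom = α := by
  let Gq : Q ⋙ G ≅ G := NatIso.ofComponents (fun X => asIso (G.map (q.app X)))
    (fun f => by
      dsimp; rw [← G.map_comp, ← G.map_comp]; exact G.congr_map (q.naturality f))
  refine ⟨Gq.inv ≫ Functor.whiskerLeft Q α, ?_, fun β hβ => ?_⟩
  · ext X
    simp [Gq]
  · ext X
    simp only [NatTrans.comp_app, Gq, NatIso.ofComponents_inv_app, asIso_inv,
      Functor.whiskerLeft_app, IsIso.eq_inv_comp]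
    calc G.map (q.app X) ≫ β.app X = β.app (Q.obj X) ≫ H.map (Q.map (q.app X)) :=
          β.naturality (q.app X)
      _ = α.app (Q.obj X) := by simpa [hH] using NatTrans.congr_app hβ (Q.obj X)

end CategoryTheory

theorem statement3_general {M : Type u₁} [Category.{v₁} M] {N : Type u₂} [Category.{v₂} N]
    (WM : MorphismProperty M) (WN : MorphismProperty N)
    (h26M : ∀ {X Y Z T : M} (f : X ⟶ Y) (g : Y ⟶ Z) (h : Z ⟶ T),
      WM (f ≫ g) → WM (g ≫ h) → WM f ∧ WM g ∧ WM h ∧ WM (f ≫ g ≫ h))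
    (F : M ⥤ N)
    (P : M → Prop) (Q : M ⥤ M) (hQ : ∀ X : M, P (Q.obj X))
    (q : Q ⟶ 𝟭 M) (hq : ∀ X : M, WM (q.app X))
    -- `F` preserves weak equivalences between objects of `M_Q`:
    (hF : ∀ {X Y : M} (f : X ⟶ Y), P X → P Y → WM f → WN (F.map f)) :
    -- the comparison map `δ(Fq) : δ∘F∘Q ⟶ δ∘F`
    let δ := WN.Q
    let κ : Q ⋙ F ⋙ δ ⟶ F ⋙ δ :=
      Functor.whiskerRight q (F ⋙ δ) ≫ (Functor.leftUnitor (F ⋙ δ)).hom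
    -- `δ∘F∘Q` is homotopical, and `(δ∘F∘Q, κ)` is terminal:
    (∀ {X Y : M} (f : X ⟶ Y), WM f → IsIso ((Q ⋙ F ⋙ δ).map f)) ∧
    (∀ (G : M ⥤ WN.Localization)
      (_ : ∀ {X Y : M} (f : X ⟶ Y), WM f → IsIso (G.map f))
      (α : G ⟶ F ⋙ δ),
      ∃! β : G ⟶ Q ⋙ F ⋙ δ, β ≫ κ = α) := by
  intro δ κ
  have := WM.hasTwoOutOfThreeProperty_of_twoOutOfSix_s3 h26M
  have hFδ : ∀ {X Y : M} (f : X ⟶ Y), WM f → IsIso ((F ⋙ δ).map (Q.map f)) := fun f hf =>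
    Localization.inverts δ WN _ (hF _ (hQ _) (hQ _) (WM.map_mem_of_app_mem q hq hf))
  refine ⟨hFδ, fun G hG α => existsUnique_comp_whiskerRight_eq q (fun X => hG _ (hq X))
    (fun X => ?_) α⟩
  have : IsIso ((F ⋙ δ).map (q.app (Q.obj (Q.obj X)))) :=
    Localization.inverts δ WN _ (hF _ (hQ _) (hQ _) (hq _))
  have := hFδ _ (hq X)
  exact map_map_app_eq_map_app_obj q (F ⋙ δ) X

/-- If `(Q, q)` is a left deformation of `M` into a full subcategory `M_Q`
on which `F : M ⥤ N` preserves weak equivalences, then `δ ∘ F ∘ Q : M ⥤ Ho(N)` sends weak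
equivalences to isomorphisms and, equipped with the comparison map `δ(Fq)`, is terminal
among homotopical functors `M ⥤ Ho(N)` with a map to `δ ∘ F`. -/
theorem statement3 {M : Type u₁} [Category.{v₁} M] {N : Type u₂} [Category.{v₂} N]
    (WM : MorphismProperty M) (WN : MorphismProperty N)
    (hidM : ∀ X : M, WM (𝟙 X))
    (h26M : ∀ {X Y Z T : M} (f : X ⟶ Y) (g : Y ⟶ Z) (h : Z ⟶ T),
      WM (f ≫ g) → WM (g ≫ h) → WM f ∧ WM g ∧ WM h ∧ WM (f ≫ g ≫ h))
    (hidN : ∀ X : N, WN (𝟙 X))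
    (h26N : ∀ {X Y Z T : N} (f : X ⟶ Y) (g : Y ⟶ Z) (h : Z ⟶ T),
      WN (f ≫ g) → WN (g ≫ h) → WN f ∧ WN g ∧ WN h ∧ WN (f ≫ g ≫ h))
    (F : M ⥤ N)
    (P : M → Prop) (Q : M ⥤ M) (hQ : ∀ X : M, P (Q.obj X))
    (q : Q ⟶ 𝟭 M) (hq : ∀ X : M, WM (q.app X))
    -- `F` preserves weak equivalences between objects of `M_Q`:
    (hF : ∀ {X Y : M} (f : X ⟶ Y), P X → P Y → WM f → WN (F.map f)) :
    -- the comparison map `δ(Fq) : δ∘F∘Q ⟶ δ∘F`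
    let δ := WN.Q
    let κ : Q ⋙ F ⋙ δ ⟶ F ⋙ δ :=
      Functor.whiskerRight q (F ⋙ δ) ≫ (Functor.leftUnitor (F ⋙ δ)).hom
    -- `δ∘F∘Q` is homotopical, and `(δ∘F∘Q, κ)` is terminal:
    (∀ {X Y : M} (f : X ⟶ Y), WM f → IsIso ((Q ⋙ F ⋙ δ).map f)) ∧
    (∀ (G : M ⥤ WN.Localization)
      (_ : ∀ {X Y : M} (f : X ⟶ Y), WM f → IsIso (G.map f))
      (α : G ⟶ F ⋙ δ),
      ∃! β : G ⟶ Q ⋙ F ⋙ δ, β ≫ κ = α) :=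
  statement3_general WM WN h26M F P Q hQ q hq hF
end

section
/- Let F₁ : M → N and F₂ : N → P be functors between homotopical categories. Suppose there are left deformations (Q_M, q_M) of M into M_Q and (Q_N, q_N) of N into N_Q such that: F₁ preserves weak equivalences on M_Q, F₂ preserves weak equivalences on N_Q, F₂∘F₁ preserves weak equivalences on M_Q, and F₁ maps M_Q into N_Q. Then the composite of the induced functors on homotopy categories, Ho(F₂ ∘ Q_N) ∘ Ho(F₁ ∘ Q_M), is naturally isomorphic to Ho((F₂ ∘ F₁) ∘ Q_M); i.e. LF₂ ∘ LF₁ ≅ L(F₂ ∘ F₁). -/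
/-!
Since `F₁` sends `Q_M`-objects to `N_Q` and `F₂` is homotopical there, `F₂` inverts every
`q_N (F₁ (Q_M X))` after localization, so `Q_N` can be dropped from
`Q_M ⋙ F₁ ⋙ Q_N ⋙ F₂`. Hence `LF₁ ⋙ LF₂` and `L(F₂ ∘ F₁)` both restrict along the localization
functor of `M` to `Q_M ⋙ F₁ ⋙ F₂` (up to iso), and restriction along a localization functor is
fully faithful.
-/

open CategoryTheory

namespace CategoryTheory

variable {C N D : Type*} [Category C] [Category N] [Category D]

noncomputable def Functor.deformationIso (K : C ⥤ N) {Q : N ⥤ N} (q : Q ⟶ 𝟭 N) (G : N ⥤ D)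
    [∀ X, IsIso (G.map (q.app (K.obj X)))] : K ⋙ Q ⋙ G ≅ K ⋙ G :=
  NatIso.ofComponents (fun X => asIso (G.map (q.app (K.obj X)))) fun f => by
    simp only [Functor.comp_map, asIso_hom, ← G.map_comp, q.naturality, Functor.id_map]

noncomputable def Functor.compLiftIsoOfDeformation {C' N' : Type*} [Category C'] [Category N']
    (L : C ⥤ C') (LN : N ⥤ N') (K : C ⥤ N) {Q : N ⥤ N} (q : Q ⟶ 𝟭 N) (G : N ⥤ D)
    [∀ X, IsIso (G.map (q.app (K.obj X)))] (LF₁ : C' ⥤ N') (LF₂ : N' ⥤ D)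
    (e₁ : L ⋙ LF₁ ≅ K ⋙ LN) (e₂ : LN ⋙ LF₂ ≅ Q ⋙ G) : L ⋙ LF₁ ⋙ LF₂ ≅ K ⋙ G :=
  calc L ⋙ LF₁ ⋙ LF₂ ≅ (L ⋙ LF₁) ⋙ LF₂ := (Functor.associator _ _ _).symm
    _ ≅ (K ⋙ LN) ⋙ LF₂ := Functor.isoWhiskerRight e₁ LF₂
    _ ≅ K ⋙ LN ⋙ LF₂ := Functor.associator _ _ _
    _ ≅ K ⋙ Q ⋙ G := Functor.isoWhiskerLeft K e₂
    _ ≅ K ⋙ G := K.deformationIso q G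

end CategoryTheory

theorem statement8_general {M : Type u₁} [Category.{v₁} M] {N : Type u₂} [Category.{v₂} N]
    {P : Type u₃} [Category.{v₃} P]
    (WM : MorphismProperty M) (WN : MorphismProperty N) (WP : MorphismProperty P)
    (F₁ : M ⥤ N) (F₂ : N ⥤ P)
    (PM : M → Prop) (QM : M ⥤ M) (hQM : ∀ X : M, PM (QM.obj X))
    (PN : N → Prop) (QN : N ⥤ N) (hQN : ∀ X : N, PN (QN.obj X))
    (qN : QN ⟶ 𝟭 N) (hqN : ∀ X : N, WN (qN.app X))
    -- `F₁` is homotopical on `M_Q`, `F₂` on `N_Q`, `F₂∘F₁` on `M_Q`: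
    (hF₂ : ∀ {X Y : N} (f : X ⟶ Y), PN X → PN Y → WN f → WP (F₂.map f))
    -- `F₁` maps `M_Q` into `N_Q`:
    (hF₁Q : ∀ X : M, PM X → PN (F₁.obj X))
    -- the induced (derived) functors on homotopy categories:
    (LF₁ : WM.Localization ⥤ WN.Localization)
    (e₁ : WM.Q ⋙ LF₁ ≅ QM ⋙ F₁ ⋙ WN.Q)
    (LF₂ : WN.Localization ⥤ WP.Localization)
    (e₂ : WN.Q ⋙ LF₂ ≅ QN ⋙ F₂ ⋙ WP.Q)
    (LF₁₂ : WM.Localization ⥤ WP.Localization)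
    (e₁₂ : WM.Q ⋙ LF₁₂ ≅ QM ⋙ (F₁ ⋙ F₂) ⋙ WP.Q) :
    Nonempty (LF₁ ⋙ LF₂ ≅ LF₁₂) := by
  have : ∀ X, IsIso ((F₂ ⋙ WP.Q).map (qN.app ((QM ⋙ F₁).obj X))) := fun X =>
    Localization.inverts WP.Q WP _ (hF₂ _ (hQN _) (hF₁Q _ (hQM X)) (hqN _))
  let e : WM.Q ⋙ LF₁ ⋙ LF₂ ≅ WM.Q ⋙ LF₁₂ :=
    Functor.compLiftIsoOfDeformation WM.Q WN.Q (QM ⋙ F₁) qN (F₂ ⋙ WP.Q) LF₁ LF₂ e₁ e₂ ≪≫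
      e₁₂.symm
  exact ⟨(Localization.fullyFaithfulWhiskeringLeft WM.Q WM _).preimageIso e⟩

/-- For a left deformable pair `(F₁, F₂)`, the composite of the left derived
functors is a left derived functor of the composite: `LF₂ ∘ LF₁ ≅ L(F₂ ∘ F₁)`. -/
theorem statement8 {M : Type u₁} [Category.{v₁} M] {N : Type u₂} [Category.{v₂} N]
    {P : Type u₃} [Category.{v₃} P]
    (WM : MorphismProperty M) (WN : MorphismProperty N) (WP : MorphismProperty P)
    (hidM : ∀ X : M, WM (𝟙 X))
    (h26M : ∀ {X Y Z T : M} (f : X ⟶ Y) (g : Y ⟶ Z) (h : Z ⟶ T),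
      WM (f ≫ g) → WM (g ≫ h) → WM f ∧ WM g ∧ WM h ∧ WM (f ≫ g ≫ h))
    (hidN : ∀ X : N, WN (𝟙 X))
    (h26N : ∀ {X Y Z T : N} (f : X ⟶ Y) (g : Y ⟶ Z) (h : Z ⟶ T),
      WN (f ≫ g) → WN (g ≫ h) → WN f ∧ WN g ∧ WN h ∧ WN (f ≫ g ≫ h))
    (hidP : ∀ X : P, WP (𝟙 X))
    (h26P : ∀ {X Y Z T : P} (f : X ⟶ Y) (g : Y ⟶ Z) (h : Z ⟶ T),
      WP (f ≫ g) → WP (g ≫ h) → WP f ∧ WP g ∧ WP h ∧ WP (f ≫ g ≫ h))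
    (F₁ : M ⥤ N) (F₂ : N ⥤ P)
    (PM : M → Prop) (QM : M ⥤ M) (hQM : ∀ X : M, PM (QM.obj X))
    (qM : QM ⟶ 𝟭 M) (hqM : ∀ X : M, WM (qM.app X))
    (PN : N → Prop) (QN : N ⥤ N) (hQN : ∀ X : N, PN (QN.obj X))
    (qN : QN ⟶ 𝟭 N) (hqN : ∀ X : N, WN (qN.app X))
    -- `F₁` is homotopical on `M_Q`, `F₂` on `N_Q`, `F₂∘F₁` on `M_Q`:
    (hF₁ : ∀ {X Y : M} (f : X ⟶ Y), PM X → PM Y → WM f → WN (F₁.map f))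
    (hF₂ : ∀ {X Y : N} (f : X ⟶ Y), PN X → PN Y → WN f → WP (F₂.map f))
    (hF₂F₁ : ∀ {X Y : M} (f : X ⟶ Y), PM X → PM Y → WM f → WP (F₂.map (F₁.map f)))
    -- `F₁` maps `M_Q` into `N_Q`:
    (hF₁Q : ∀ X : M, PM X → PN (F₁.obj X))
    -- the induced (derived) functors on homotopy categories:
    (LF₁ : WM.Localization ⥤ WN.Localization)
    (e₁ : WM.Q ⋙ LF₁ ≅ QM ⋙ F₁ ⋙ WN.Q)
    (LF₂ : WN.Localization ⥤ WP.Localization)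
    (e₂ : WN.Q ⋙ LF₂ ≅ QN ⋙ F₂ ⋙ WP.Q)
    (LF₁₂ : WM.Localization ⥤ WP.Localization)
    (e₁₂ : WM.Q ⋙ LF₁₂ ≅ QM ⋙ (F₁ ⋙ F₂) ⋙ WP.Q) :
    Nonempty (LF₁ ⋙ LF₂ ≅ LF₁₂) :=
  statement8_general WM WN WP F₁ F₂ PM QM hQM PN QN hQN qN hqN hF₂ hF₁Q LF₁ e₁ LF₂ e₂ LF₁₂ e₁₂
end

section
/- Let D be a small category, let Δᵒᵖ D denote the opposite of its category of simplices (objects are functors α : [n] → D for n ≥ 0, i.e. strings of composable arrows in D), and let S : Δᵒᵖ D → D be the functor sending a simplex α : [n] → D to its source object α(0). Then S is a final (cofinal) functor; consequently, for every functor F : D → M into a cocomplete category M, the canonical map colim_{Δᵒᵖ D} (F ∘ S) → colim_D F is an isomorphism. -/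
open CategoryTheory CategoryTheory.Limits

namespace Statement10

universe v u u₂ v₂

variable {D : Type u} [Category.{v} D]

private lemma key1 {P : Type*} [Preorder P] (F : P ⥤ D) {i j : P} (hij : j = i)
    (a : i ≤ j) (E : F.obj j = F.obj i) :
    F.map (homOfLE a) ≫ eqToHom E = 𝟙 (F.obj i) := by
  subst hij
  rw [Subsingleton.elim E rfl, eqToHom_refl, Category.comp_id,
    Subsingleton.elim (homOfLE a) (𝟙 _)]
  exact F.map_id _

private lemma key3 {P : Type*} [Preorder P] (F : P ⥤ D) {Z : D} {i j k l l' : P}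
    (hjk : j = k) (hll' : l = l')
    (a : i ≤ l) (b : i ≤ j) (c : k ≤ l')
    (E1 : F.obj l = Z) (E2 : F.obj j = F.obj k) (E3 : F.obj l' = Z) :
    F.map (homOfLE a) ≫ eqToHom E1 =
      F.map (homOfLE b) ≫ eqToHom E2 ≫ F.map (homOfLE c) ≫ eqToHom E3 := by
  subst hjk; subst hll'
  rw [Subsingleton.elim E2 rfl, eqToHom_refl, Category.id_comp,
    Subsingleton.elim E1 E3, ← Category.assoc, ← F.map_comp]
  congr 1

variable (D)

/-- The opposite category of simplices `Δᵒᵖ D` of a small category `D`, realized as the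
category of elements of the nerve of `D`: its objects are the simplices `α : [n] → D`
of the nerve, of all dimensions. -/
abbrev OpSimplices := (nerve D).Elements

/-- The "source" functor `S : Δᵒᵖ D ⥤ D`, sending a simplex `α : [n] → D` to its
initial vertex `α(0)`. -/
def Sfunc : OpSimplices D ⥤ D where
  obj p := p.2.obj (0 : Fin (p.1.unop.len + 1))
  map {p q} f :=
    p.2.map (homOfLE (Fin.zero_le
        ((SimplexCategory.toCat.map f.1.unop).toFunctor.obj (0 : Fin (q.1.unop.len + 1))))) ≫
      eqToHom (Functor.congr_obj f.2 (0 : Fin (q.1.unop.len + 1)))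
  map_id p := key1 p.2 rfl _ _
  map_comp {p q r} f g := by
    dsimp only
    rw [Functor.congr_hom f.2.symm
      (homOfLE (Fin.zero_le ((SimplexCategory.toCat.map g.1.unop).toFunctor.obj (0 : Fin (r.1.unop.len + 1)))))]
    simp only [Category.assoc, eqToHom_trans, eqToHom_trans_assoc]
    erw [eqToHom_trans_assoc, eqToHom_trans]
    exact key3 p.2 rfl rfl _ _ _ _ _ _

end Statement10

/-!
An object of `StructuredArrow d (Sfunc D)` is a simplex `α` of the nerve together with an
arrow `f : d ⟶ α 0`. Prepending `f` to `α` gives a simplex whose `0`-th face is `α` and whose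
`0`-th vertex is `d`; so every object is linked, through this longer simplex, to the
`0`-simplex `d` with the identity arrow, and the comma category is connected.
-/

namespace Statement10

open Simplicial

variable {D : Type u} [Category.{v} D]

lemma nerve_map_δ_zero_precomp {n : ℕ} (F : ComposableArrows D n) {X : D} (f : X ⟶ F.left) :
    (nerve D).map (SimplexCategory.δ 0).op (F.precomp f) = F := rfl

lemma nerve_map_const_zero {n : ℕ} (F : ComposableArrows D n) :
    (nerve D).map (SimplexCategory.const ⦋0⦌ ⦋n⦌ 0).op F = .mk₀ (F.obj 0) :=
  ComposableArrows.ext₀ rfl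

variable (d : D)

abbrev vertexArrow : StructuredArrow d (Sfunc D) :=
  .mk (Y := (nerve D).elementsMk (.op ⦋0⦌) (.mk₀ d)) (𝟙 d)

variable {d}

abbrev precompArrow (X : StructuredArrow d (Sfunc D)) : StructuredArrow d (Sfunc D) :=
  .mk (Y := (nerve D).elementsMk (.op ⦋X.right.1.unop.len + 1⦌) (X.right.2.precomp X.hom)) (𝟙 d)

-- In both morphisms below the triangle commutes definitionally, as `𝟙 d ≫ g ≫ 𝟙 _ = g`.
def precompArrowFace (X : StructuredArrow d (Sfunc D)) : precompArrow X ⟶ X :=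
  StructuredArrow.homMk
    (CategoryOfElements.homMk _ X.right (SimplexCategory.δ 0).op
      (nerve_map_δ_zero_precomp X.right.2 X.hom))
    (by exact (Category.id_comp _).trans (Category.comp_id _))

def precompArrowVertex (X : StructuredArrow d (Sfunc D)) : precompArrow X ⟶ vertexArrow d :=
  StructuredArrow.homMk
    (CategoryOfElements.homMk _ _ (SimplexCategory.const ⦋0⦌ _ 0).op (nerve_map_const_zero _))
    (by exact (Category.id_comp _).trans (Category.comp_id _))

lemma zigzag_vertexArrow (X : StructuredArrow d (Sfunc D)) : Zigzag X (vertexArrow d) :=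
  .of_inv_hom (precompArrowFace X) (precompArrowVertex X)

theorem final_Sfunc : (Sfunc D).Final where
  out d :=
    have : Nonempty (StructuredArrow d (Sfunc D)) := ⟨vertexArrow d⟩
    zigzag_isConnected fun X Y => (zigzag_vertexArrow X).trans (zigzag_vertexArrow Y).symm

end Statement10

open Statement10

/-- The source functor `S : Δᵒᵖ D ⥤ D` from the (opposite) category of
simplices of `D` is final; consequently, for every functor `F : D ⥤ M` into a cocomplete
category `M`, the canonical map `colim_{Δᵒᵖ D} (F ∘ S) ⟶ colim_D F` is an isomorphism. -/
theorem statement10 (D : Type u) [SmallCategory D] :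
    (Sfunc D).Final ∧
    ∀ (M : Type u₂) [Category.{v₂} M] [HasColimitsOfSize.{u, u} M] [HasColimitsOfSize.{0, u} M] (F : D ⥤ M),
      IsIso (colimit.pre F (Sfunc D)) := by
  have hS : (Sfunc D).Final := final_Sfunc
  exact ⟨hS, fun M _ _ _ F => inferInstance⟩
end

section
/- Let D be a small category, Δᵒᵖ D its opposite category of simplices with forgetful functor Σ : Δᵒᵖ D → Δᵒᵖ sending an n-simplex to [n], and S : Δᵒᵖ D → D the source functor. Let M be cocomplete and F : D → M a functor. Then the left Kan extension of F ∘ S along Σ is computed objectwise by (Lan_Σ (F∘S))([n]) ≅ ∐_{α : [n] → D} F(α(0)), the coproduct over all functors α : [n] → D (i.e. all n-simplices of the nerve of D) of the value of F at the initial vertex of α. In particular, the comma category (Σ ↓ [n]) is a disjoint union, indexed by the n-simplices α of N D, of categories each having a terminal object given by α itself. -/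
open CategoryTheory CategoryTheory.Limits

namespace Statement11

universe v u u₂ v₂

variable {D : Type u} [Category.{v} D]

private lemma key1 {P : Type*} [Preorder P] (F : P ⥤ D) {i j : P} (hij : j = i)
    (a : i ≤ j) (E : F.obj j = F.obj i) :
    F.map (homOfLE a) ≫ eqToHom E = 𝟙 (F.obj i) := by
  subst hij
  rw [Subsingleton.elim E rfl, eqToHom_refl, Category.comp_id,
    Subsingleton.elim (homOfLE a) (𝟙 _)]
  exact F.map_id _

private lemma key3 {P : Type*} [Preorder P] (F : P ⥤ D) {Z : D} {i j k l l' : P}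
    (hjk : j = k) (hll' : l = l')
    (a : i ≤ l) (b : i ≤ j) (c : k ≤ l')
    (E1 : F.obj l = Z) (E2 : F.obj j = F.obj k) (E3 : F.obj l' = Z) :
    F.map (homOfLE a) ≫ eqToHom E1 =
      F.map (homOfLE b) ≫ eqToHom E2 ≫ F.map (homOfLE c) ≫ eqToHom E3 := by
  subst hjk; subst hll'
  rw [Subsingleton.elim E2 rfl, eqToHom_refl, Category.id_comp,
    Subsingleton.elim E1 E3, ← Category.assoc, ← F.map_comp]
  congr 1

variable (D)

/-- The opposite category of simplices `Δᵒᵖ D` of a small category `D`, realized as the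
category of elements of the nerve of `D`: its objects are the simplices `α : [n] → D`
of the nerve, of all dimensions. -/
abbrev OpSimplices := (nerve D).Elements

/-- The "source" functor `S : Δᵒᵖ D ⥤ D`, sending a simplex `α : [n] → D` to its
initial vertex `α(0)`. -/
def Sfunc : OpSimplices D ⥤ D where
  obj p := p.2.obj (0 : Fin (p.1.unop.len + 1))
  map {p q} f :=
    p.2.map (homOfLE (Fin.zero_le
        ((SimplexCategory.toCat.map f.1.unop).toFunctor.obj (0 : Fin (q.1.unop.len + 1))))) ≫
      eqToHom (Functor.congr_obj f.2 (0 : Fin (q.1.unop.len + 1)))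
  map_id p := key1 p.2 rfl _ _
  map_comp {p q r} f g := by
    dsimp only
    rw [Functor.congr_hom f.2.symm
      (homOfLE (Fin.zero_le ((SimplexCategory.toCat.map g.1.unop).toFunctor.obj (0 : Fin (r.1.unop.len + 1)))))]
    simp only [Category.assoc, eqToHom_trans, eqToHom_trans_assoc]
    erw [eqToHom_trans_assoc, eqToHom_trans]
    exact key3 p.2 rfl rfl _ _ _ _ _ _

end Statement11

open Statement11

/-!
Write `π : P.Elements ⥤ C` for the projection of the category of elements of `P : C ⥤ Type w`.
An object `x` of the comma category `(π ↓ Y)` determines the element `P.map x.hom x.left.2`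
of `P.obj Y`, and it maps to the object `(⟨Y, y⟩, 𝟙 Y)` for exactly one `y`, namely this
element, by exactly one morphism. Hence `(π ↓ Y)` is a disjoint union over `P.obj Y` of
categories with a terminal object, the inclusion of these terminal objects is final, and the
pointwise left Kan extension along `π` at `Y` is the coproduct of the values at the terminal
objects. For the nerve of `D` and `G = F ∘ S` these values are `F (α 0)`.
-/

namespace CategoryTheory.CategoryOfElements

open Limits

universe w v₁ v₂ u₁ u₂

variable {C : Type u₁} [Category.{v₁} C] {P : C ⥤ Type w} {Y : C}

abbrev costructuredArrowMk (y : P.obj Y) : CostructuredArrow (π P) Y :=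
  CostructuredArrow.mk (show (π P).obj ⟨Y, y⟩ ⟶ Y from 𝟙 Y)

def costructuredArrowElement (x : CostructuredArrow (π P) Y) : P.obj Y :=
  P.map x.hom x.left.2

def toCostructuredArrowMk (x : CostructuredArrow (π P) Y) :
    x ⟶ costructuredArrowMk (costructuredArrowElement x) :=
  CostructuredArrow.homMk ⟨x.hom, rfl⟩ (Category.comp_id x.hom)

lemma hom_costructuredArrowMk_left_val {x : CostructuredArrow (π P) Y} {y : P.obj Y}
    (f : x ⟶ costructuredArrowMk y) : f.left.val = x.hom :=
  (Category.comp_id _).symm.trans (CostructuredArrow.w f)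

lemma costructuredArrowElement_eq_of_hom {x : CostructuredArrow (π P) Y} {y : P.obj Y}
    (f : x ⟶ costructuredArrowMk y) : costructuredArrowElement x = y := by
  have h := f.left.2
  rw [hom_costructuredArrowMk_left_val f] at h
  exact h

instance (x : CostructuredArrow (π P) Y) (y : P.obj Y) :
    Subsingleton (x ⟶ costructuredArrowMk y) where
  allEq f g := CostructuredArrow.hom_ext _ _ <|
    ext P _ _ ((hom_costructuredArrowMk_left_val f).trans
      (hom_costructuredArrowMk_left_val g).symm)

lemma existsUnique_nonempty_unique_hom_costructuredArrowMk (x : CostructuredArrow (π P) Y) :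
    ∃! y : P.obj Y, Nonempty (Unique (x ⟶ costructuredArrowMk y)) :=
  ⟨costructuredArrowElement x, ⟨uniqueOfSubsingleton (toCostructuredArrowMk x)⟩,
    fun _ ⟨h⟩ => (costructuredArrowElement_eq_of_hom h.default).symm⟩

variable (P Y) in
def discreteToCostructuredArrow : Discrete (P.obj Y) ⥤ CostructuredArrow (π P) Y :=
  Discrete.functor costructuredArrowMk

instance (x : CostructuredArrow (π P) Y) :
    Subsingleton (StructuredArrow x (discreteToCostructuredArrow P Y)) where
  allEq := by
    rintro ⟨⟨⟨⟩⟩, ⟨a⟩, f⟩ ⟨⟨⟨⟩⟩, ⟨b⟩, g⟩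
    obtain rfl : a = b := (costructuredArrowElement_eq_of_hom (y := a) f).symm.trans
      (costructuredArrowElement_eq_of_hom (y := b) g)
    obtain rfl : f = g := Subsingleton.elim (α := x ⟶ costructuredArrowMk a) _ _
    rfl

instance : (discreteToCostructuredArrow P Y).Final where
  out x :=
    have : Nonempty (StructuredArrow x (discreteToCostructuredArrow P Y)) :=
      ⟨StructuredArrow.mk (show x ⟶ (discreteToCostructuredArrow P Y).obj ⟨_⟩ from
        toCostructuredArrowMk x)⟩
    isConnected_of_nonempty_and_subsingleton

variable {M : Type u₂} [Category.{v₂} M] [HasCoproducts.{w} M] (G : P.Elements ⥤ M)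

instance : (π P).HasPointwiseLeftKanExtension G := fun Y =>
  Functor.Final.hasColimit_of_comp (discreteToCostructuredArrow P Y)

noncomputable def leftKanExtensionObjIsoSigma [(π P).HasLeftKanExtension G] (Y : C) :
    ((π P).leftKanExtension G).obj Y ≅ ∐ fun y : P.obj Y => G.obj ⟨Y, y⟩ :=
  (π P).leftKanExtensionObjIsoColimit G Y ≪≫
    (Functor.Final.colimitIso (discreteToCostructuredArrow P Y) _).symm ≪≫
    HasColimit.isoOfNatIso Discrete.natIsoFunctor

end CategoryTheory.CategoryOfElements

open CategoryOfElements

theorem statement11_general (D : Type u) [SmallCategory D] (M : Type u₂) [Category.{v₂} M]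
    [Limits.HasColimitsOfSize.{u, u} M]
    (F : D ⥤ M)
    [(CategoryOfElements.π (nerve D)).HasLeftKanExtension (Sfunc D ⋙ F)] :
    (∀ n : ℕ,
      Nonempty ((((CategoryOfElements.π (nerve D)).leftKanExtension (Sfunc D ⋙ F)).obj
          (Opposite.op (SimplexCategory.mk n))) ≅
        ∐ (fun α : ComposableArrows D n => F.obj (α.obj 0)))) ∧
    (∀ (n : ℕ)
      (x : CostructuredArrow (CategoryOfElements.π (nerve D))
        (Opposite.op (SimplexCategory.mk n))),
      ∃! α : ComposableArrows D n,
        Nonempty (Unique (x ⟶ CostructuredArrow.mk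
          (show (CategoryOfElements.π (nerve D)).obj
              ⟨Opposite.op (SimplexCategory.mk n), α⟩ ⟶ Opposite.op (SimplexCategory.mk n)
            from 𝟙 _)))) :=
  ⟨fun _ => ⟨leftKanExtensionObjIsoSigma (Sfunc D ⋙ F) _⟩,
    fun _ => existsUnique_nonempty_unique_hom_costructuredArrowMk⟩

/-- The left Kan extension of `F ∘ S` along `Σ : Δᵒᵖ D ⥤ Δᵒᵖ` is computed
objectwise by `(Lan_Σ (F∘S))([n]) ≅ ∐_{α : [n] → D} F(α(0))`, the coproduct over all
`n`-simplices `α` of the nerve of `D` of the value of `F` at the initial vertex of `α`;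
and the comma category `(Σ ↓ [n])` is a disjoint union, indexed by the `n`-simplices `α`,
of categories each having a terminal object given by `α` itself. -/
theorem statement11 (D : Type u) [SmallCategory D] (M : Type u₂) [Category.{v₂} M]
    [Limits.HasColimitsOfSize.{u, u} M] [Limits.HasColimitsOfSize.{0, u} M]
    (F : D ⥤ M)
    [(CategoryOfElements.π (nerve D)).HasLeftKanExtension (Sfunc D ⋙ F)] :
    (∀ n : ℕ,
      Nonempty ((((CategoryOfElements.π (nerve D)).leftKanExtension (Sfunc D ⋙ F)).obj
          (Opposite.op (SimplexCategory.mk n))) ≅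
        ∐ (fun α : ComposableArrows D n => F.obj (α.obj 0)))) ∧
    (∀ (n : ℕ)
      (x : CostructuredArrow (CategoryOfElements.π (nerve D))
        (Opposite.op (SimplexCategory.mk n))),
      ∃! α : ComposableArrows D n,
        Nonempty (Unique (x ⟶ CostructuredArrow.mk
          (show (CategoryOfElements.π (nerve D)).obj
              ⟨Opposite.op (SimplexCategory.mk n), α⟩ ⟶ Opposite.op (SimplexCategory.mk n)
            from 𝟙 _)))) :=
  statement11_general D M F
end
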